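/- arXiv:2201.11033 — 2 statements merged into one kernel-verified Lean document; each statement's English description precedes it below -/
import Mathlib

section
/- Every finitely aligned left cancellative monoid is strongly C*-regular. -/
/-- The principal right ideal `sM` of a monoid. -/
def rIdeal {M : Type*} [Monoid M] (s : M) : Set M := {m | ∃ u, m = s * u}


/-- The constructible right ideals of a monoid `M`: the smallest family of subsets of `M`
containing `M` itself and closed under the operations `X ↦ tX` and `X ↦ t⁻¹X = {m | t·m ∈ X}`
for every `t ∈ M`. -/
inductive IsConstructible (M : Type*) [Monoid M] : Set M → Prop
  | univ : IsConstructible M Set.univ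
  | mul (t : M) {X : Set M} : IsConstructible M X → IsConstructible M ((t * ·) '' X)
  | preimage (t : M) {X : Set M} : IsConstructible M X → IsConstructible M {m | t * m ∈ X}

/-- We encode partial bijections of a monoid `M` by their graphs, i.e. subsets of `M × M`.
`InLeftHull M G` says that the partial map with graph `G` belongs to the left inverse hull
`I_ℓ(M)` of `M`: the smallest collection of partial bijections of `M` containing the left
translations `m ↦ s·m` (with domain all of `M`) for every `s ∈ M` and closed under taking
inverses and compositions. -/
inductive InLeftHull (M : Type*) [Monoid M] : Set (M × M) → Prop
  | translation (s : M) : InLeftHull M {p | p.2 = s * p.1}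
  | inv {G : Set (M × M)} : InLeftHull M G → InLeftHull M {p | (p.2, p.1) ∈ G}
  | comp {G H : Set (M × M)} : InLeftHull M G → InLeftHull M H →
      InLeftHull M {p | ∃ z, (p.1, z) ∈ G ∧ (z, p.2) ∈ H}

/-- The domain of a partial map encoded by its graph. -/
def pDom {M : Type*} (G : Set (M × M)) : Set M := {m | ∃ y, (m, y) ∈ G}

/-- A left cancellative monoid `M` is *strongly C*-regular* if whenever
`h 0, …, h (n-1) ∈ I_ℓ(M)` and constructible right ideals `X, Xs 0, …, Xs (m-1) ∈ 𝒥(M)` satisfy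
`∅ ≠ X \ (Xs 0 ∪ ⋯ ∪ Xs (m-1)) ⊆ ⋃ₖ {s | s ∈ dom (h k), (h k) s = s}`, there are constructible
right ideals `Y 0, …, Y (l-1) ∈ 𝒥(M)` and indices `kj 0, …, kj (l-1)` such that
`X \ (Xs 0 ∪ ⋯ ∪ Xs (m-1)) ⊆ Y 0 ∪ ⋯ ∪ Y (l-1)` and, for each `j`, `Y j ⊆ dom (h (kj j))` and
`h (kj j)` fixes every point of `Y j`.  (Note that `(s, s) ∈ G` says exactly that `s` lies in
the domain of the partial map with graph `G` and is fixed by it.) -/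
def StronglyCstarRegular (M : Type*) [Monoid M] : Prop :=
  ∀ (n : ℕ) (h : Fin n → Set (M × M)) (m : ℕ) (X : Set M) (Xs : Fin m → Set M),
    (∀ k, InLeftHull M (h k)) →
    IsConstructible M X → (∀ i, IsConstructible M (Xs i)) →
    (X \ ⋃ i, Xs i).Nonempty →
    (X \ ⋃ i, Xs i) ⊆ (⋃ k, {s : M | (s, s) ∈ h k}) →
    ∃ (l : ℕ) (Y : Fin l → Set M) (kj : Fin l → Fin n),
      (∀ j, IsConstructible M (Y j)) ∧
      (X \ ⋃ i, Xs i) ⊆ (⋃ j, Y j) ∧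
      ∀ j, Y j ⊆ {s : M | (s, s) ∈ h (kj j)}

/-- A left cancellative monoid `M` is finitely aligned if for all `s t : M` the right ideal
`sM ∩ tM` is a finite (possibly empty) union of principal right ideals. -/
def FinitelyAligned (M : Type*) [Monoid M] : Prop :=
  ∀ s t : M, ∃ F : Finset M, rIdeal s ∩ rIdeal t = ⋃ f ∈ F, rIdeal f

theorem rIdeal_constructible {M : Type*} [Monoid M] (a : M) : IsConstructible M (rIdeal a) := by
  have h := IsConstructible.mul a (IsConstructible.univ (M := M))
  convert h using 1
  ext x
  simp [rIdeal, eq_comm]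

theorem constructible_rightIdeal {M : Type*} [Monoid M] {X : Set M}
    (h : IsConstructible M X) : ∀ x ∈ X, ∀ v, x * v ∈ X := by
  induction h with
  | univ => intros; trivial
  | mul t _ ih =>
      rintro _ ⟨x, hx, rfl⟩ v
      exact ⟨x * v, ih x hx v, by simp [mul_assoc]⟩
  | preimage t _ ih =>
      intro x hx v
      simp only [Set.mem_setOf_eq] at *
      rw [← mul_assoc]
      exact ih _ hx v

theorem hull_rightmul {M : Type*} [Monoid M] {G : Set (M × M)}
    (h : InLeftHull M G) : ∀ p ∈ G, ∀ v, (p.1 * v, p.2 * v) ∈ G := by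
  induction h with
  | translation s =>
      rintro ⟨x, y⟩ hp v
      simp only [Set.mem_setOf_eq] at *
      rw [hp, mul_assoc]
  | inv _ ih => rintro ⟨x, y⟩ hp v; exact ih (y, x) hp v
  | comp _ _ ih1 ih2 =>
      rintro ⟨x, y⟩ ⟨z, h1, h2⟩ v
      exact ⟨z * v, ih1 (x, z) h1 v, ih2 (z, y) h2 v⟩

theorem preimage_rIdeal_finite {M : Type*} [Monoid M]
    (hlc : ∀ s t t' : M, s * t = s * t' → t = t')
    (hfa : FinitelyAligned M) (a t : M) :
    ∃ G : Finset M, {m | t * m ∈ rIdeal a} = ⋃ g ∈ G, rIdeal g := by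
  classical
  obtain ⟨F, hF⟩ := hfa a t
  have hmem : ∀ f ∈ F, f ∈ rIdeal a ∩ rIdeal t := by
    intro f hf
    rw [hF]
    exact Set.mem_biUnion hf ⟨1, (mul_one f).symm⟩
  let r : M → M := fun f => if h : ∃ u, f = t * u then h.choose else 1
  have hr : ∀ f ∈ F, f = t * r f := by
    intro f hf
    have h2 : ∃ u, f = t * u := (hmem f hf).2
    simp only [r, dif_pos h2]
    exact h2.choose_spec
  refine ⟨F.image r, ?_⟩
  ext m
  simp only [Set.mem_setOf_eq, Set.mem_iUnion, Finset.mem_image, exists_prop]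
  constructor
  · intro hm
    have : t * m ∈ rIdeal a ∩ rIdeal t := ⟨hm, ⟨m, rfl⟩⟩
    rw [hF] at this
    obtain ⟨f, hfF, u, hu⟩ := Set.mem_iUnion₂.mp this
    refine ⟨r f, ⟨f, hfF, rfl⟩, u, ?_⟩
    apply hlc t
    rw [hu, ← mul_assoc, ← hr f hfF]
  · rintro ⟨g, ⟨f, hfF, rfl⟩, u, rfl⟩
    have h3 : t * (r f * u) = f * u := by rw [← mul_assoc, ← hr f hfF]
    rw [h3]
    have h4 : f * u ∈ rIdeal a ∩ rIdeal t := by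
      rw [hF]
      exact Set.mem_biUnion hfF ⟨u, rfl⟩
    exact h4.1

theorem constructible_finite_union {M : Type*} [Monoid M]
    (hlc : ∀ s t t' : M, s * t = s * t' → t = t')
    (hfa : FinitelyAligned M) {X : Set M} (h : IsConstructible M X) :
    ∃ F : Finset M, X = ⋃ a ∈ F, rIdeal a := by
  classical
  induction h with
  | univ =>
      refine ⟨{1}, ?_⟩
      ext x
      constructor
      · intro _
        exact Set.mem_biUnion (Finset.mem_singleton_self 1) ⟨x, (one_mul x).symm⟩
      · intro _; trivial
  | mul t _ ih =>
      obtain ⟨F, rfl⟩ := ih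
      refine ⟨F.image (t * ·), ?_⟩
      ext x
      constructor
      · rintro ⟨y, hy, rfl⟩
        obtain ⟨a, haF, u, rfl⟩ := Set.mem_iUnion₂.mp hy
        exact Set.mem_biUnion (Finset.mem_image_of_mem _ haF) ⟨u, (mul_assoc t a u).symm⟩
      · intro hx
        obtain ⟨b, hbF, u, rfl⟩ := Set.mem_iUnion₂.mp hx
        obtain ⟨a, haF, rfl⟩ := Finset.mem_image.mp hbF
        exact ⟨a * u, Set.mem_biUnion haF ⟨u, rfl⟩, (mul_assoc t a u).symm⟩
  | preimage t _ ih =>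
      obtain ⟨F, rfl⟩ := ih
      choose G hG using fun a => preimage_rIdeal_finite hlc hfa a t
      refine ⟨F.biUnion G, ?_⟩
      ext x
      constructor
      · intro hx
        have hx' : t * x ∈ ⋃ a ∈ F, rIdeal a := hx
        obtain ⟨a, haF, hxa⟩ := Set.mem_iUnion₂.mp hx'
        have h2 : x ∈ ⋃ g ∈ G a, rIdeal g := by rw [← hG a]; exact hxa
        obtain ⟨g, hgG, hxg⟩ := Set.mem_iUnion₂.mp h2
        exact Set.mem_biUnion (Finset.mem_biUnion.mpr ⟨a, haF, hgG⟩) hxg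
      · intro hx
        obtain ⟨g, hgB, hxg⟩ := Set.mem_iUnion₂.mp hx
        obtain ⟨a, haF, hgG⟩ := Finset.mem_biUnion.mp hgB
        have h2 : x ∈ ⋃ g ∈ G a, rIdeal g := Set.mem_biUnion hgG hxg
        rw [← hG a] at h2
        exact Set.mem_biUnion haF h2

/-- Every finitely aligned left cancellative monoid is strongly C*-regular. -/
theorem finitelyAligned_stronglyCstarRegular (M : Type*) [Monoid M]
    (hlc : ∀ s t t' : M, s * t = s * t' → t = t')
    (hfa : FinitelyAligned M) :
    StronglyCstarRegular M := by
  intro n h m X Xs hh hX hXs hne hcov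
  classical
  obtain ⟨F, hF⟩ := constructible_finite_union hlc hfa hX
  set D := X \ ⋃ i, Xs i with hD
  let F' : Finset M := F.filter (· ∈ D)
  let e : Fin F'.card ≃ {x // x ∈ F'} := F'.equivFin.symm
  have heD : ∀ j : Fin F'.card, (e j : M) ∈ D := by
    intro j
    have := (e j).2
    exact (Finset.mem_filter.mp this).2
  have hk : ∀ j : Fin F'.card, ∃ k, ((e j : M), (e j : M)) ∈ h k := by
    intro j
    have h1 := hcov (heD j)
    obtain ⟨S, ⟨k, rfl⟩, hS⟩ := h1
    exact ⟨k, hS⟩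
  choose kj hkj using hk
  refine ⟨F'.card, fun j => rIdeal (e j : M), kj, fun j => rIdeal_constructible _, ?_, ?_⟩
  · -- coverage
    intro s hs
    have hsX : s ∈ X := hs.1
    rw [hF] at hsX
    obtain ⟨a, haF, u, rfl⟩ := Set.mem_iUnion₂.mp hsX
    have haD : a ∈ D := by
      constructor
      · rw [hF]
        exact Set.mem_biUnion haF ⟨1, (mul_one a).symm⟩
      · intro hmem
        obtain ⟨i, hi⟩ := Set.mem_iUnion.mp hmem
        exact hs.2 (Set.mem_iUnion.mpr ⟨i, constructible_rightIdeal (hXs i) a hi u⟩)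
    have haF' : a ∈ F' := Finset.mem_filter.mpr ⟨haF, haD⟩
    refine Set.mem_iUnion.mpr ⟨F'.equivFin ⟨a, haF'⟩, ?_⟩
    have : (e (F'.equivFin ⟨a, haF'⟩) : M) = a := by
      simp [e]
    rw [this]
    exact ⟨u, rfl⟩
  · -- fixed points
    intro j s hsY
    obtain ⟨u, rfl⟩ := hsY
    exact hull_rightmul (hh (kj j)) ((e j : M), (e j : M)) (hkj j) u
end

section
/- Every left cancellative monoid that embeds into a group (i.e., admits an injective monoid homomorphism into some group) is strongly C*-regular. -/
/-- Image of a set under a partial map encoded by its graph. -/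
def pImg {M : Type*} (Gr : Set (M × M)) (X : Set M) : Set M :=
  {y | ∃ x, x ∈ X ∧ (x, y) ∈ Gr}

theorem leftHull_key {M : Type*} [Monoid M] {Γ : Type*} [Group Γ] (f : M →* Γ)
    {Gr : Set (M × M)} (hGr : InLeftHull M Gr) :
    (∃ g : Γ, ∀ p ∈ Gr, f p.2 = g * f p.1) ∧
    (∀ X, IsConstructible M X →
      IsConstructible M (pImg Gr X) ∧ IsConstructible M (pImg {p | (p.2, p.1) ∈ Gr} X)) := by
  induction hGr with
  | translation s =>
    refine ⟨⟨f s, fun p hp => by simp only [Set.mem_setOf_eq] at hp; simp [hp]⟩, fun X hX => ?_⟩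
    constructor
    · have : pImg {p : M × M | p.2 = s * p.1} X = (s * ·) '' X := by
        ext y; simp [pImg, Set.mem_image, eq_comm]
      rw [this]; exact hX.mul s
    · have : pImg {p : M × M | (p.2, p.1) ∈ {p : M × M | p.2 = s * p.1}} X
          = {m | s * m ∈ X} := by
        ext y
        constructor
        · rintro ⟨x, hx, hxy⟩
          simp only [Set.mem_setOf_eq] at hxy
          simpa [hxy] using hx
        · intro hy; exact ⟨s * y, hy, rfl⟩
      rw [this]; exact hX.preimage s
  | inv hG ih =>
    obtain ⟨⟨g, hg⟩, hc⟩ := ih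
    refine ⟨⟨g⁻¹, fun p hp => ?_⟩, fun X hX => ?_⟩
    · have := hg _ hp
      simp only at this
      rw [this]; group
    · refine ⟨(hc X hX).2, ?_⟩
      have : {p : M × M | ((p.2, p.1).2, (p.2, p.1).1) ∈ _root_.id Gr} = Gr := rfl
      exact (hc X hX).1
  | @comp Gg Hh hG hH ihG ihH =>
    obtain ⟨⟨g, hg⟩, hcG⟩ := ihG
    obtain ⟨⟨g', hg'⟩, hcH⟩ := ihH
    refine ⟨⟨g' * g, fun p hp => ?_⟩, fun X hX => ?_⟩
    · obtain ⟨z, hz1, hz2⟩ := hp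
      have e1 := hg (p.1, z) hz1
      have e2 := hg' (z, p.2) hz2
      simp only at e1 e2
      rw [e2, e1, mul_assoc]
    · constructor
      · have : pImg {p : M × M | ∃ z, (p.1, z) ∈ Gg ∧ (z, p.2) ∈ Hh} X
            = pImg Hh (pImg Gg X) := by
          ext y
          constructor
          · rintro ⟨x, hx, z, hz1, hz2⟩
            exact ⟨z, ⟨x, hx, hz1⟩, hz2⟩
          · rintro ⟨z, ⟨x, hx, hz1⟩, hz2⟩
            exact ⟨x, hx, z, hz1, hz2⟩
        rw [this]
        exact (hcH _ (hcG X hX).1).1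
      · have : pImg {p : M × M | ((p.2, p.1).1, (p.2, p.1).2) ∈
            {p : M × M | ∃ z, (p.1, z) ∈ Gg ∧ (z, p.2) ∈ Hh}} X
            = pImg {p | (p.2, p.1) ∈ Gg} (pImg {p | (p.2, p.1) ∈ Hh} X) := by
          ext y
          constructor
          · rintro ⟨x, hx, z, hz1, hz2⟩
            exact ⟨z, ⟨x, hx, hz2⟩, hz1⟩
          · rintro ⟨z, ⟨x, hx, hz2⟩, hz1⟩
            exact ⟨x, hx, z, hz1, hz2⟩
        rw [this]
        exact (hcG _ (hcH X hX).2).2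

/-- Every left cancellative monoid that embeds into a group (i.e. admits an injective monoid
homomorphism into some group) is strongly C*-regular. -/
theorem groupEmbeddable_stronglyCstarRegular (M : Type*) [Monoid M]
    (hlc : ∀ s t t' : M, s * t = s * t' → t = t')
    (G : Type*) [Group G] (f : M →* G) (hf : Function.Injective f) :
    StronglyCstarRegular M := by
  classical
  intro n h m X Xs hHull hX hXs hne hsub
  obtain ⟨s0, hs0⟩ := hne
  obtain ⟨k0, hk0⟩ : ∃ k, (s0, s0) ∈ h k := by
    have := hsub hs0
    simpa using this
  -- domains are constructible
  have hdom : ∀ k, IsConstructible M (pDom (h k)) := by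
    intro k
    have : pDom (h k) = pImg {p | (p.2, p.1) ∈ h k} Set.univ := by
      ext x
      constructor
      · rintro ⟨y, hy⟩; exact ⟨y, trivial, hy⟩
      · rintro ⟨y, _, hy⟩; exact ⟨y, hy⟩
    rw [this]
    exact ((leftHull_key f (hHull k)).2 Set.univ IsConstructible.univ).2
  -- if h k has a fixed point, it fixes its whole domain
  have hfix : ∀ k, (∃ s : M, (s, s) ∈ h k) → pDom (h k) ⊆ {s : M | (s, s) ∈ h k} := by
    intro k ⟨s, hs⟩ x ⟨y, hxy⟩
    obtain ⟨⟨g, hg⟩, -⟩ := leftHull_key f (hHull k)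
    have hg1 : g = 1 := by
      have := hg (s, s) hs
      simp only at this
      exact mul_right_cancel (by rw [one_mul]; exact this.symm)
    have : f y = f x := by
      have := hg (x, y) hxy
      simpa [hg1] using this
    have : y = x := hf this
    subst this
    exact hxy
  refine ⟨n, fun k => pDom (h (if (∃ s : M, (s, s) ∈ h k) then k else k0)),
    fun k => if (∃ s : M, (s, s) ∈ h k) then k else k0, fun j => hdom _, ?_, ?_⟩
  · intro x hx
    obtain ⟨k, hk⟩ : ∃ k, (x, x) ∈ h k := by simpa using hsub hx
    refine Set.mem_iUnion.2 ⟨k, ?_⟩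
    have hxk : ∃ s : M, (s, s) ∈ h k := ⟨x, hk⟩
    simp only [if_pos hxk]
    exact ⟨x, hk⟩
  · intro j
    by_cases hc : ∃ s : M, (s, s) ∈ h j
    · simp only [if_pos hc]
      exact hfix _ hc
    · simp only [if_neg hc]
      exact hfix _ ⟨s0, hk0⟩
end
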